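/- Let T be a p-string with unique smallest end-marker, w a p-string, and c ∈ Σp a p-symbol occurring in w. Then LF_T(p) lies in the cw-interval if and only if p lies in the w-interval and L_T[p] = fce(cw); hence the cw-interval equals [LF_T(l'')..LF_T(r'')] where l'', r'' are the first and last positions p in the w-interval with L_T[p] = fce(cw). -/

import Mathlib

/-- Symbols of a parameterized string: static symbols `s a` (from Σs) and
parameter symbols `p a` (from Σp). -/
inductive PSym where
  | s : ℕ → PSym
  | p : ℕ → PSym
deriving DecidableEq

/-- Symbols of a p-encoded string: static symbols, finite distances, and ∞. -/
inductive Enc where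
  | s : ℕ → Enc
  | fin : ℕ → Enc
  | inf : Enc
deriving DecidableEq

/-- Order embedding: static symbols < natural numbers < ∞. -/
def Enc.toPair : Enc → ℕ ×ₗ ℕ
  | .s a => toLex (0, a)
  | .fin d => toLex (1, d)
  | .inf => toLex (2, 0)

instance : LinearOrder Enc :=
  LinearOrder.lift' Enc.toPair (by
    rintro (a | a | _) (b | b | _) h <;>
      simp_all [Enc.toPair, toLex_inj, Prod.ext_iff])

/-- Largest position `j < i` (0-based) carrying the same symbol as position `i`. -/
def prevOcc (w : List PSym) (i : ℕ) : Option ℕ :=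
  ((List.range i).filter (fun j => w[j]? = w[i]?)).max?

/-- The p-encoding of position `i` (0-based) of `w`. -/
def pencSym (w : List PSym) (i : ℕ) : Enc :=
  match w[i]? with
  | some (PSym.s a) => Enc.s a
  | some (PSym.p _) =>
    match prevOcc w i with
    | some j => Enc.fin (i - j)
    | none => Enc.inf
  | none => Enc.inf

/-- The p-encoding ⟨w⟩ of a p-string `w`. -/
def penc (w : List PSym) : List Enc :=
  (List.range w.length).map (pencSym w)

/-- Lexicographic (strict) order on p-encoded strings. -/
def lexLt (x y : List Enc) : Prop := List.Lex (· < ·) x y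

def lexLe (x y : List Enc) : Prop := lexLt x y ∨ x = y

/-- Length of the longest common prefix. -/
def lcp {α : Type*} [DecidableEq α] : List α → List α → ℕ
  | a :: x, b :: y => if a = b then lcp x y + 1 else 0
  | _, _ => 0

/-- Number of ∞'s in the longest common prefix of two p-encoded strings. -/
def lcpInf (x y : List Enc) : ℕ := (x.take (lcp x y)).count Enc.inf

/-- Number of distinct p-symbols occurring in `w` (denoted |w|_p). -/
def distinctP (w : List PSym) : ℕ :=
  (w.filterMap (fun s => match s with | PSym.p a => some a | PSym.s _ => none)).dedup.length

/-- For `w` starting with a p-symbol: the rank of `w[1]` among the distinct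
p-symbols of `w[1..h+1]`, where `h+1 = min{|w|, second occurrence of w[1] in w}`. -/
def fceRank (w : List PSym) : ℕ :=
  match w with
  | [] => 0
  | c :: rest => distinctP ((c :: rest).take (min (c :: rest).length (2 + rest.idxOf c)))

/-- The function fce from the paper; `fce ε = $` is modelled as `Enc.s 0`. -/
def fce (w : List PSym) : Enc :=
  match w with
  | [] => Enc.s 0
  | PSym.s a :: _ => Enc.s a
  | w => Enc.fin (fceRank w)

/-! Prepending a p-symbol `b` to `v` changes the p-encoding in one place only: the first
occurrence of `b` in `v`, encoded `∞`, becomes its distance to the front, and `fce (b v)` is one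
more than the number of `∞`s of `⟨v⟩` before that place. When `c` occurs in `w` the place lies
inside `⟨w⟩`, so `⟨c w⟩` is a prefix of `⟨b v⟩` exactly when `⟨w⟩` is a prefix of `⟨v⟩` and
`fce (b v) = fce (c w)`; then `⟨w⟩ ++ t = ⟨v⟩` gives `⟨c w⟩ ++ t = ⟨b v⟩`, so LF preserves the
order of these suffixes. The cw-interval is thus the monotone LF-image of the positions of the
w-interval with `L = fce (c w)`, and its ends are the images of the first and last of them. -/

theorem List.IsPrefix.set {α : Type*} {l₁ l₂ : List α} (h : l₁ <+: l₂) (i : ℕ) (x : α) :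
    l₁.set i x <+: l₂.set i x := by
  obtain ⟨t, rfl⟩ := h
  rw [List.set_append]
  split_ifs with hi
  · exact List.prefix_append _ _
  · rw [List.set_eq_of_length_le (by omega)]
    exact List.prefix_append _ _

theorem List.append_lt_append_iff_left {α : Type*} [LT α] [Std.Irrefl (· < · : α → α → Prop)]
    {l₁ l₂ l₃ : List α} : l₁ ++ l₂ < l₁ ++ l₃ ↔ l₂ < l₃ := by
  induction l₁ with
  | nil => rfl
  | cons a l₁ ih => simp [ih]

theorem List.count_take_lt_count_take {α : Type*} [BEq α] [LawfulBEq α] {l : List α} {x : α}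
    {i j : ℕ} (hx : l[i]? = some x) (hij : i < j) :
    (l.take i).count x < (l.take j).count x := by
  have hsucc : (l.take (i + 1)).count x = (l.take i).count x + 1 := by
    rw [List.take_add_one, hx, List.count_append]
    simp
  have hle : (l.take (i + 1)).count x ≤ (l.take j).count x :=
    (List.take_sublist_take_left hij).count_le _
  omega

theorem penc_length (u : List PSym) : (penc u).length = u.length := by
  simp [penc]

theorem getElem_penc {u : List PSym} {i : ℕ} (h : i < (penc u).length) :
    (penc u)[i] = pencSym u i := by
  simp [penc]

theorem prevOcc_eq_some_iff {u : List PSym} {i j : ℕ} :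
    prevOcc u i = some j ↔
      j < i ∧ u[j]? = u[i]? ∧ ∀ j' < i, u[j']? = u[i]? → j' ≤ j := by
  simp only [prevOcc, List.max?_eq_some_iff, List.mem_filter, List.mem_range,
    decide_eq_true_eq, and_imp, and_assoc]

theorem prevOcc_eq_none_iff {u : List PSym} {i : ℕ} :
    prevOcc u i = none ↔ ∀ j < i, u[j]? ≠ u[i]? := by
  simp [prevOcc, List.filter_eq_nil_iff]

theorem idxOf_eq_iff_prevOcc_eq_none {v : List PSym} {b : PSym} {i : ℕ} (hi : i < v.length) :
    v.idxOf b = i ↔ v[i]? = some b ∧ prevOcc v i = none := by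
  rw [List.idxOf, List.findIdx_eq hi, prevOcc_eq_none_iff, List.getElem?_eq_getElem hi]
  constructor
  · rintro ⟨hb, hlt⟩
    have hb : v[i] = b := by simpa using hb
    refine ⟨by rw [hb], fun j hj => ?_⟩
    have := hlt j hj
    rw [List.getElem?_eq_getElem (by omega), hb]
    simpa using this
  · rintro ⟨hb, hlt⟩
    have hb : v[i] = b := by simpa using hb
    refine ⟨by simp [hb], fun j hj => ?_⟩
    have := hlt j hj
    rw [List.getElem?_eq_getElem (by omega), hb] at this
    simpa using this

theorem prevOcc_cons_succ (b : PSym) {v : List PSym} {i : ℕ} (hi : i < v.length) :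
    prevOcc (b :: v) (i + 1) =
      if v.idxOf b = i then some 0 else (prevOcc v i).map (· + 1) := by
  split_ifs with hidx
  · obtain ⟨hb, hnone⟩ := (idxOf_eq_iff_prevOcc_eq_none hi).1 hidx
    rw [prevOcc_eq_none_iff] at hnone
    refine prevOcc_eq_some_iff.2 ⟨i.succ_pos, by simp [hb], fun j hj hj' => ?_⟩
    rcases j with _ | j
    · exact le_rfl
    · exact absurd (by simpa using hj') (hnone j (by omega))
  · rcases hp : prevOcc v i with _ | j
    · refine prevOcc_eq_none_iff.2 fun j hj hj' => ?_
      rcases j with _ | j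
      · exact hidx ((idxOf_eq_iff_prevOcc_eq_none hi).2 ⟨by simpa using hj'.symm, hp⟩)
      · exact prevOcc_eq_none_iff.1 hp j (by omega) (by simpa using hj')
    · obtain ⟨hji, hj, hmax⟩ := prevOcc_eq_some_iff.1 hp
      show prevOcc (b :: v) (i + 1) = some (j + 1)
      refine prevOcc_eq_some_iff.2 ⟨by omega, by simpa using hj, fun j' hj' hj'' => ?_⟩
      rcases j' with _ | j'
      · omega
      · have := hmax j' (by omega) (by simpa using hj'')
        omega

theorem pencSym_of_getElem?_eq_s {u : List PSym} {i x : ℕ} (h : u[i]? = some (PSym.s x)) :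
    pencSym u i = Enc.s x := by
  simp [pencSym, h]

theorem pencSym_zero_p (b : ℕ) (v : List PSym) : pencSym (PSym.p b :: v) 0 = Enc.inf := by
  simp [pencSym, prevOcc]

theorem pencSym_cons_succ_of_ne {b : PSym} {v : List PSym} {i : ℕ} (hi : i < v.length)
    (h : v.idxOf b ≠ i) : pencSym (b :: v) (i + 1) = pencSym v i := by
  unfold pencSym
  rw [List.getElem?_cons_succ, prevOcc_cons_succ b hi, if_neg h]
  rcases v[i]? with _ | (_ | _) <;> rcases prevOcc v i with _ | _ <;> simp

theorem pencSym_cons_succ_idxOf {b : ℕ} {v : List PSym} (h : PSym.p b ∈ v) :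
    pencSym (PSym.p b :: v) (v.idxOf (PSym.p b) + 1) = Enc.fin (v.idxOf (PSym.p b) + 1) := by
  have hi := List.idxOf_lt_length_of_mem h
  have hb := ((idxOf_eq_iff_prevOcc_eq_none hi).1 rfl).1
  simp [pencSym, prevOcc_cons_succ _ hi, hb]

theorem pencSym_idxOf {b : ℕ} {v : List PSym} (h : PSym.p b ∈ v) :
    pencSym v (v.idxOf (PSym.p b)) = Enc.inf := by
  obtain ⟨hb, hnone⟩ := (idxOf_eq_iff_prevOcc_eq_none (List.idxOf_lt_length_of_mem h)).1 rfl
  simp [pencSym, hb, hnone]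

theorem getElem?_penc_idxOf {b : ℕ} {v : List PSym} (h : PSym.p b ∈ v) :
    (penc v)[v.idxOf (PSym.p b)]? = some Enc.inf := by
  rw [List.getElem?_eq_getElem (by rw [penc_length]; exact List.idxOf_lt_length_of_mem h),
    getElem_penc, pencSym_idxOf h]

theorem pencSym_ne_fin_of_lt {u : List PSym} {i d : ℕ} (h : i < d) : pencSym u i ≠ Enc.fin d := by
  unfold pencSym
  rcases u[i]? with _ | (_ | _) <;> try rcases prevOcc u i with _ | _
  all_goals simp only [ne_eq, reduceCtorEq, not_false_eq_true, Enc.fin.injEq]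
  omega

theorem penc_cons_s (x : ℕ) (v : List PSym) : penc (PSym.s x :: v) = Enc.s x :: penc v := by
  refine List.ext_getElem (by simp [penc_length]) fun i h₁ h₂ => ?_
  rw [getElem_penc]
  rcases i with _ | i
  · exact pencSym_of_getElem?_eq_s rfl
  have hi : i < v.length := by simpa [penc_length] using h₁
  rw [List.getElem_cons_succ, getElem_penc]
  by_cases hidx : v.idxOf (PSym.s x) = i
  · have hx := ((idxOf_eq_iff_prevOcc_eq_none hi).1 hidx).1
    rw [pencSym_of_getElem?_eq_s hx, pencSym_of_getElem?_eq_s (by simpa using hx)]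
  · exact pencSym_cons_succ_of_ne hi hidx

theorem penc_cons_p (b : ℕ) (v : List PSym) :
    penc (PSym.p b :: v) =
      Enc.inf :: (penc v).set (v.idxOf (PSym.p b)) (Enc.fin (v.idxOf (PSym.p b) + 1)) := by
  refine List.ext_getElem (by simp [penc_length]) fun i h₁ h₂ => ?_
  rw [getElem_penc]
  rcases i with _ | i
  · exact pencSym_zero_p b v
  have hi : i < v.length := by simpa [penc_length] using h₁
  rw [List.getElem_cons_succ, List.getElem_set]
  split_ifs with hidx
  · subst hidx
    exact pencSym_cons_succ_idxOf (List.idxOf_lt_length_iff.1 hi)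
  · rw [getElem_penc]
    exact pencSym_cons_succ_of_ne hi hidx

theorem penc_take (u : List PSym) (j : ℕ) : penc (u.take j) = (penc u).take j := by
  refine List.ext_getElem (by simp [penc_length]) fun i h₁ h₂ => ?_
  have hij : i < j := by simp only [penc_length, List.length_take, lt_inf_iff] at h₁; omega
  have hprev : prevOcc (u.take j) i = prevOcc u i := by
    unfold prevOcc
    congr 1
    refine List.filter_congr fun x hx => ?_
    rw [List.mem_range] at hx
    simp [hij, show x < j by omega]
  rw [getElem_penc, List.getElem_take, getElem_penc]
  simp only [pencSym, List.getElem?_take, hij, if_true, hprev]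

theorem distinctP_cons_s (x : ℕ) (v : List PSym) : distinctP (PSym.s x :: v) = distinctP v := by
  simp [distinctP]

theorem distinctP_cons_p_of_mem {b : ℕ} {v : List PSym} (h : PSym.p b ∈ v) :
    distinctP (PSym.p b :: v) = distinctP v := by
  simp only [distinctP, List.filterMap_cons]
  rw [List.dedup_cons_of_mem]
  exact List.mem_filterMap.2 ⟨PSym.p b, h, rfl⟩

theorem distinctP_cons_p_of_not_mem {b : ℕ} {v : List PSym} (h : PSym.p b ∉ v) :
    distinctP (PSym.p b :: v) = distinctP v + 1 := by
  simp only [distinctP, List.filterMap_cons]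
  rw [List.dedup_cons_of_notMem, List.length_cons]
  intro hb
  obtain ⟨(_ | _), hx, hbx⟩ := List.mem_filterMap.1 hb <;> simp_all

/-- Each distinct p-symbol contributes exactly one `∞`, at its first occurrence. -/
theorem distinctP_eq_count_penc (u : List PSym) : distinctP u = (penc u).count Enc.inf := by
  induction u with
  | nil => rfl
  | cons b v ih =>
    rcases b with x | b
    · simp [penc_cons_s, distinctP_cons_s, ih]
    rw [penc_cons_p, List.count_cons_self]
    by_cases h : PSym.p b ∈ v
    · have hk : v.idxOf (PSym.p b) < (penc v).length := by
        rw [penc_length]; exact List.idxOf_lt_length_of_mem h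
      have hinf : (penc v)[v.idxOf (PSym.p b)] = Enc.inf := by
        rw [getElem_penc]; exact pencSym_idxOf h
      have hpos : 0 < (penc v).count Enc.inf := List.count_pos_iff.2 (hinf ▸ List.getElem_mem hk)
      rw [List.count_set hk, hinf, distinctP_cons_p_of_mem h, ih]
      simp only [BEq.rfl, ↓reduceIte, beq_iff_eq, reduceCtorEq, add_zero]
      omega
    · rw [List.set_eq_of_length_le (by rw [penc_length, List.idxOf_of_notMem h]),
        distinctP_cons_p_of_not_mem h, ih]

theorem fce_cons_p (b : ℕ) (v : List PSym) :
    fce (PSym.p b :: v) = Enc.fin (((penc v).take (v.idxOf (PSym.p b))).count Enc.inf + 1) := by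
  show Enc.fin (fceRank _) = _
  congr 1
  simp only [fceRank, List.length_cons]
  by_cases h : PSym.p b ∈ v
  · have hk := List.idxOf_lt_length_of_mem h
    rw [show min (v.length + 1) (2 + v.idxOf (PSym.p b)) = v.idxOf (PSym.p b) + 1 + 1 by omega,
      List.take_succ_cons, distinctP_cons_p_of_mem ((List.mem_take_iff_idxOf_lt h).2 (by omega)),
      distinctP_eq_count_penc, penc_take, List.take_add_one, getElem?_penc_idxOf h]
    simp
  · rw [List.idxOf_of_notMem h, List.take_of_length_le (by simp),
      distinctP_cons_p_of_not_mem h, distinctP_eq_count_penc,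
      List.take_of_length_le (by rw [penc_length])]

theorem fce_cons_s (x : ℕ) (v : List PSym) : fce (PSym.s x :: v) = Enc.s x := rfl

theorem penc_cons_eq_append_of_fce_eq {w v : List PSym} {a : ℕ} {b : PSym} {t : List Enc}
    (ha : PSym.p a ∈ w) (ht : penc v = penc w ++ t)
    (hf : fce (b :: v) = fce (PSym.p a :: w)) :
    penc (b :: v) = penc (PSym.p a :: w) ++ t := by
  rcases b with x | b
  · rw [fce_cons_s, fce_cons_p] at hf; cases hf
  rw [fce_cons_p, fce_cons_p, Enc.fin.injEq, Nat.add_right_cancel_iff] at hf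
  rw [penc_cons_p, penc_cons_p]
  set k := w.idxOf (PSym.p a)
  set k' := v.idxOf (PSym.p b)
  have hk : k < (penc w).length := by rw [penc_length]; exact List.idxOf_lt_length_of_mem ha
  have hinf : (penc v)[k]? = some Enc.inf := by
    rw [ht, List.getElem?_append_left hk, getElem?_penc_idxOf ha]
  have htake : (penc v).take k = (penc w).take k := by
    rw [ht, List.take_append_of_le_length hk.le]
  have hcount : ((penc v).take k').count Enc.inf = ((penc v).take k).count Enc.inf := by
    rw [hf, htake]
  -- the number of `∞`s in a prefix grows strictly past every `∞`, so equal counts force `k' = k`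
  have hkk' : k' = k := by
    rcases lt_trichotomy k' k with hlt | heq | hlt
    · have hb : PSym.p b ∈ v := List.idxOf_lt_length_iff.1 (by
        have := congrArg List.length ht
        simp only [penc_length, List.length_append] at this hk
        omega)
      exact absurd hcount (List.count_take_lt_count_take (getElem?_penc_idxOf hb) hlt).ne
    · exact heq
    · exact absurd hcount (List.count_take_lt_count_take hinf hlt).ne'
  rw [hkk', ht, List.set_append_left _ _ hk, List.cons_append]

theorem penc_cons_prefix_iff {w v : List PSym} {a : ℕ} {b : PSym} (ha : PSym.p a ∈ w) :
    penc (PSym.p a :: w) <+: penc (b :: v) ↔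
      penc w <+: penc v ∧ fce (b :: v) = fce (PSym.p a :: w) := by
  refine ⟨fun h => ?_, fun ⟨⟨t, ht⟩, hf⟩ => ⟨t, (penc_cons_eq_append_of_fce_eq ha ht.symm hf).symm⟩⟩
  rcases b with x | b
  · rw [penc_cons_s, penc_cons_p, List.cons_prefix_cons] at h
    cases h.1
  rw [penc_cons_p, penc_cons_p, List.cons_prefix_cons] at h
  rw [fce_cons_p, fce_cons_p]
  replace h := h.2
  set k := w.idxOf (PSym.p a)
  set k' := v.idxOf (PSym.p b)
  have hk : k < (penc w).length := by rw [penc_length]; exact List.idxOf_lt_length_of_mem ha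
  have hkv : k < (penc v).length := by
    have := h.length_le
    simp only [List.length_set] at this
    omega
  -- entry `k` on the left is `fin (k + 1)`, a distance reaching past the front of `v`
  have hkk' : k' = k := by
    by_contra hne
    have hk' := h.getElem (i := k) (by simpa using hk)
    rw [List.getElem_set_self, List.getElem_set_ne hne, getElem_penc] at hk'
    exact pencSym_ne_fin_of_lt k.lt_succ_self hk'.symm
  have hb : PSym.p b ∈ v := List.idxOf_lt_length_iff.1 (by rw [penc_length] at hkv; omega)
  have hPk : (penc w)[k] = Enc.inf := by rw [getElem_penc]; exact pencSym_idxOf ha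
  have hVk : (penc v)[k] = Enc.inf := by rw [getElem_penc, ← hkk']; exact pencSym_idxOf hb
  have hwv : penc w <+: penc v := by
    -- resetting position `k` to `∞` undoes the marking on both sides
    have := h.set k Enc.inf
    rwa [hkk', List.set_set, List.set_set, ← hPk, List.set_getElem_self, hPk, ← hVk,
      List.set_getElem_self] at this
  refine ⟨hwv, ?_⟩
  obtain ⟨t, ht⟩ := hwv
  rw [hkk', ← ht, List.take_append_of_le_length hk.le]

theorem penc_cons_lt_of_fce_eq {w v₁ v₂ : List PSym} {a : ℕ} {b₁ b₂ : PSym}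
    (ha : PSym.p a ∈ w) (h₁ : penc w <+: penc v₁) (h₂ : penc w <+: penc v₂)
    (hf₁ : fce (b₁ :: v₁) = fce (PSym.p a :: w)) (hf₂ : fce (b₂ :: v₂) = fce (PSym.p a :: w))
    (hlt : penc v₁ < penc v₂) : penc (b₁ :: v₁) < penc (b₂ :: v₂) := by
  obtain ⟨t₁, ht₁⟩ := h₁
  obtain ⟨t₂, ht₂⟩ := h₂
  rw [penc_cons_eq_append_of_fce_eq ha ht₁.symm hf₁, penc_cons_eq_append_of_fce_eq ha ht₂.symm hf₂,
    List.append_lt_append_iff_left]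
  rwa [← ht₁, ← ht₂, List.append_lt_append_iff_left] at hlt

theorem endpoints_eq_of_strictMonoOn {f : ℕ → ℕ} {S : Set ℕ} {n l r m M : ℕ} (hr : r < n)
    (hS : ∀ p < n, (l ≤ f p ∧ f p ≤ r) ↔ p ∈ S) (hsurj : ∀ y < n, ∃ q < n, f q = y)
    (hmono : StrictMonoOn f S) (hSn : ∀ q ∈ S, q < n) (hm : IsLeast S m)
    (hM : IsGreatest S M) : l = f m ∧ r = f M := by
  obtain ⟨hlm, hmr⟩ := (hS m (hSn m hm.1)).2 hm.1
  obtain ⟨-, hMr⟩ := (hS M (hSn M hM.1)).2 hM.1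
  obtain ⟨q, hq, rfl⟩ := hsurj l (by omega)
  obtain ⟨q', hq', rfl⟩ := hsurj r hr
  have hqS : q ∈ S := (hS q hq).1 ⟨le_rfl, by omega⟩
  have hq'S : q' ∈ S := (hS q' hq').1 ⟨by omega, le_rfl⟩
  have := hmono.monotoneOn hm.1 hqS (hm.2 hqS)
  have := hmono.monotoneOn hq'S hM.1 (hM.2 hq'S)
  omega

section SuffixArray

variable {T : List PSym} {n : ℕ} {Rinv R LF : ℕ → ℕ} {L : ℕ → Enc}

theorem lf_lt (hdom : ∀ i < n, Rinv i < n) (hRdom : ∀ p < n, R p < n)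
    (hLF : ∀ i < n, LF i = if Rinv i = 0 then R (n - 1) else R (Rinv i - 1))
    {p : ℕ} (hp : p < n) : LF p < n := by
  have := hdom p hp
  rw [hLF p hp]
  split_ifs <;> exact hRdom _ (by omega)

theorem exists_lf_eq (hdom : ∀ i < n, Rinv i < n) (hRdom : ∀ p < n, R p < n)
    (hRinv : ∀ i < n, R (Rinv i) = i) (hR : ∀ p < n, Rinv (R p) = p)
    (hLF : ∀ i < n, LF i = if Rinv i = 0 then R (n - 1) else R (Rinv i - 1))
    : ∀ y < n, ∃ q < n, LF q = y := by
  intro y hy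
  have hyn := hdom y hy
  by_cases hlast : Rinv y = n - 1
  · refine ⟨R 0, hRdom 0 (by omega), ?_⟩
    rw [hLF _ (hRdom 0 (by omega)), hR 0 (by omega), if_pos rfl, ← hlast, hRinv y hy]
  · refine ⟨R (Rinv y + 1), hRdom _ (by omega), ?_⟩
    rw [hLF _ (hRdom _ (by omega)), hR _ (by omega), if_neg (by omega), Nat.add_sub_cancel,
      hRinv y hy]

theorem rinv_ne_zero_of_L_eq_fin
    (hL : ∀ i < n, L i = fce (if Rinv i = 0 then [PSym.s 0] else T.drop (Rinv i - 1)))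
    {p d : ℕ} (hp : p < n) (hLp : L p = Enc.fin d) : Rinv p ≠ 0 := by
  intro h0
  rw [hL p hp, if_pos h0] at hLp
  cases hLp

theorem exists_drop_rinv_lf_eq_cons (hn : n = T.length) (hdom : ∀ i < n, Rinv i < n)
    (hR : ∀ p < n, Rinv (R p) = p)
    (hL : ∀ i < n, L i = fce (if Rinv i = 0 then [PSym.s 0] else T.drop (Rinv i - 1)))
    (hLF : ∀ i < n, LF i = if Rinv i = 0 then R (n - 1) else R (Rinv i - 1))
    {p : ℕ} (hp : p < n) (h0 : Rinv p ≠ 0) :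
    ∃ c, T.drop (Rinv (LF p)) = c :: T.drop (Rinv p) ∧ L p = fce (c :: T.drop (Rinv p)) := by
  have hpn := hdom p hp
  have hLFp : Rinv (LF p) = Rinv p - 1 := by rw [hLF p hp, if_neg h0, hR _ (by omega)]
  have hlt : Rinv (LF p) < T.length := by omega
  have hdrop : T.drop (Rinv (LF p)) = T[Rinv (LF p)] :: T.drop (Rinv p) := by
    rw [List.drop_eq_getElem_cons hlt, show Rinv (LF p) + 1 = Rinv p by omega]
  exact ⟨_, hdrop, by rw [hL p hp, if_neg h0, ← hLFp, hdrop]⟩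

theorem penc_cons_prefix_drop_rinv_lf_iff (hn : n = T.length) (hdom : ∀ i < n, Rinv i < n)
    (hR : ∀ p < n, Rinv (R p) = p)
    (hL : ∀ i < n, L i = fce (if Rinv i = 0 then [PSym.s 0] else T.drop (Rinv i - 1)))
    (hLF : ∀ i < n, LF i = if Rinv i = 0 then R (n - 1) else R (Rinv i - 1))
    {w : List PSym} {a : ℕ} (ha : PSym.p a ∈ w) {p : ℕ} (hp : p < n) :
    penc (PSym.p a :: w) <+: penc (T.drop (Rinv (LF p))) ↔
      penc w <+: penc (T.drop (Rinv p)) ∧ L p = fce (PSym.p a :: w) := by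
  by_cases h0 : Rinv p = 0
  · have hlast : Rinv (LF p) = n - 1 := by rw [hLF p hp, if_pos h0, hR _ (by omega)]
    have hLp : L p = Enc.s 0 := by rw [hL p hp, if_pos h0]; rfl
    have hw := List.length_pos_of_mem ha
    refine iff_of_false (fun h => ?_) (fun h => by rw [hLp, fce_cons_p] at h; cases h.2)
    have := h.length_le
    simp only [penc_length, List.length_cons, List.length_drop, hlast] at this
    omega
  · obtain ⟨c, hc, hLp⟩ := exists_drop_rinv_lf_eq_cons hn hdom hR hL hLF hp h0
    rw [hc, penc_cons_prefix_iff ha, hLp]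

theorem lt_of_penc_drop_lt
    (hsorted : ∀ i j, i < j → j < n → lexLt (penc (T.drop (Rinv i))) (penc (T.drop (Rinv j))))
    {i j : ℕ} (hi : i < n) (hj : j < n)
    (h : penc (T.drop (Rinv i)) < penc (T.drop (Rinv j))) : i < j := by
  rcases lt_trichotomy i j with hij | rfl | hji
  · exact hij
  · exact absurd h (List.lt_irrefl _)
  · exact absurd (hsorted j i hji hi) (List.lt_asymm h)

theorem lf_strictMonoOn (hn : n = T.length) (hdom : ∀ i < n, Rinv i < n)
    (hsorted : ∀ i j, i < j → j < n → lexLt (penc (T.drop (Rinv i))) (penc (T.drop (Rinv j))))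
    (hRdom : ∀ p < n, R p < n) (hR : ∀ p < n, Rinv (R p) = p)
    (hL : ∀ i < n, L i = fce (if Rinv i = 0 then [PSym.s 0] else T.drop (Rinv i - 1)))
    (hLF : ∀ i < n, LF i = if Rinv i = 0 then R (n - 1) else R (Rinv i - 1))
    {w : List PSym} {a : ℕ} (ha : PSym.p a ∈ w) :
    StrictMonoOn LF
      {q | q < n ∧ penc w <+: penc (T.drop (Rinv q)) ∧ L q = fce (PSym.p a :: w)} := by
  rintro q₁ ⟨hq₁, hw₁, hL₁⟩ q₂ ⟨hq₂, hw₂, hL₂⟩ hlt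
  obtain ⟨c₁, hc₁, hf₁⟩ :=
    exists_drop_rinv_lf_eq_cons hn hdom hR hL hLF hq₁ (rinv_ne_zero_of_L_eq_fin hL hq₁ hL₁)
  obtain ⟨c₂, hc₂, hf₂⟩ :=
    exists_drop_rinv_lf_eq_cons hn hdom hR hL hLF hq₂ (rinv_ne_zero_of_L_eq_fin hL hq₂ hL₂)
  refine lt_of_penc_drop_lt hsorted (lf_lt hdom hRdom hLF hq₁) (lf_lt hdom hRdom hLF hq₂) ?_
  rw [hc₁, hc₂]
  exact penc_cons_lt_of_fce_eq ha hw₁ hw₂ (hf₁ ▸ hL₁) (hf₂ ▸ hL₂) (hsorted q₁ q₂ hlt hq₂)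

end SuffixArray

theorem stmt18_general (T : List PSym) (n : ℕ) (hn : n = T.length)
    -- `Rinv i` is the (0-based) starting position of the lexicographically
    -- (i+1)-st p-encoded suffix of `T`
    (Rinv : ℕ → ℕ) (hdom : ∀ i < n, Rinv i < n)
    (hsorted : ∀ i j, i < j → j < n →
      lexLt (penc (T.drop (Rinv i))) (penc (T.drop (Rinv j))))
    -- `R` is the rank function, the inverse of `Rinv`
    (R : ℕ → ℕ) (hRdom : ∀ p < n, R p < n)
    (hRinv : ∀ i < n, R (Rinv i) = i) (hR : ∀ p < n, Rinv (R p) = p)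
    -- the pBWT array `L`:  L i = fce (T[R⁻¹(i)−1..])  (with T[0..] := $)
    (L : ℕ → Enc)
    (hL : ∀ i < n, L i = fce (if Rinv i = 0 then [PSym.s 0] else T.drop (Rinv i - 1)))
    -- the LF-mapping
    (LF : ℕ → ℕ)
    (hLF : ∀ i < n, LF i = if Rinv i = 0 then R (n - 1) else R (Rinv i - 1))
    -- a p-symbol c occurring in w
    (w : List PSym) (a : ℕ) (hocc : PSym.p a ∈ w)
    -- [l..r] is the w-interval: the maximal interval of ranks whose
    -- p-encoded suffixes are prefixed by ⟨w⟩
    (l r : ℕ) (hr : r < n)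
    (hwint : ∀ q < n, (l ≤ q ∧ q ≤ r ↔ penc w <+: penc (T.drop (Rinv q))))
    -- [l'..r'] is the cw-interval
    (l' r' : ℕ) (hr' : r' < n)
    (hcwint : ∀ q < n,
      (l' ≤ q ∧ q ≤ r' ↔ penc (PSym.p a :: w) <+: penc (T.drop (Rinv q))))
    -- l'' and r'' are the first and last positions in [l..r]
    -- with L-value fce(cw)
    (l'' r'' : ℕ)
    (hl1 : l ≤ l'') (hl2 : l'' ≤ r) (hl3 : L l'' = fce (PSym.p a :: w))
    (hl4 : ∀ q, l ≤ q → q ≤ r → L q = fce (PSym.p a :: w) → l'' ≤ q)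
    (hr1 : l ≤ r'') (hr2 : r'' ≤ r) (hr3 : L r'' = fce (PSym.p a :: w))
    (hr4 : ∀ q, l ≤ q → q ≤ r → L q = fce (PSym.p a :: w) → q ≤ r'') :
    (∀ p < n,
      (l' ≤ LF p ∧ LF p ≤ r') ↔ (l ≤ p ∧ p ≤ r ∧ L p = fce (PSym.p a :: w))) ∧
    l' = LF l'' ∧ r' = LF r''   := by
  have hcw : ∀ p < n,
      (l' ≤ LF p ∧ LF p ≤ r') ↔ (l ≤ p ∧ p ≤ r ∧ L p = fce (PSym.p a :: w)) := fun p hp => by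
    rw [hcwint _ (lf_lt hdom hRdom hLF hp),
      penc_cons_prefix_drop_rinv_lf_iff hn hdom hR hL hLF hocc hp, ← hwint p hp, and_assoc]
  have hmono : StrictMonoOn LF {q | l ≤ q ∧ q ≤ r ∧ L q = fce (PSym.p a :: w)} := by
    refine (lf_strictMonoOn hn hdom hsorted hRdom hR hL hLF hocc).mono ?_
    rintro q ⟨hlq, hqr, hLq⟩
    exact ⟨hqr.trans_lt hr, (hwint q (hqr.trans_lt hr)).1 ⟨hlq, hqr⟩, hLq⟩
  exact ⟨hcw, endpoints_eq_of_strictMonoOn hr' hcw (exists_lf_eq hdom hRdom hRinv hR hLF)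
    hmono (fun q hq => hq.2.1.trans_lt hr)
    ⟨⟨hl1, hl2, hl3⟩, fun q hq => hl4 q hq.1 hq.2.1 hq.2.2⟩
    ⟨⟨hr1, hr2, hr3⟩, fun q hq => hr4 q hq.1 hq.2.1 hq.2.2⟩⟩

theorem stmt18 (T : List PSym) (n : ℕ) (hn : n = T.length)
    -- `$` (modelled as `PSym.s 0`, the smallest symbol) is the end-marker of `T`
    (hend : T.getLast? = some (PSym.s 0))
    (huniq : ∀ i, i + 1 < n → T[i]? ≠ some (PSym.s 0))
    -- `Rinv i` is the (0-based) starting position of the lexicographically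
    -- (i+1)-st p-encoded suffix of `T`
    (Rinv : ℕ → ℕ) (hdom : ∀ i < n, Rinv i < n)
    (hsorted : ∀ i j, i < j → j < n →
      lexLt (penc (T.drop (Rinv i))) (penc (T.drop (Rinv j))))
    -- `R` is the rank function, the inverse of `Rinv`
    (R : ℕ → ℕ) (hRdom : ∀ p < n, R p < n)
    (hRinv : ∀ i < n, R (Rinv i) = i) (hR : ∀ p < n, Rinv (R p) = p)
    -- the pBWT array `L`:  L i = fce (T[R⁻¹(i)−1..])  (with T[0..] := $)
    (L : ℕ → Enc)
    (hL : ∀ i < n, L i = fce (if Rinv i = 0 then [PSym.s 0] else T.drop (Rinv i - 1)))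
    -- the LF-mapping
    (LF : ℕ → ℕ)
    (hLF : ∀ i < n, LF i = if Rinv i = 0 then R (n - 1) else R (Rinv i - 1))
    -- a p-symbol c occurring in w
    (w : List PSym) (a : ℕ) (hocc : PSym.p a ∈ w)
    -- [l..r] is the w-interval: the maximal interval of ranks whose
    -- p-encoded suffixes are prefixed by ⟨w⟩
    (l r : ℕ) (hr : r < n)
    (hwint : ∀ q < n, (l ≤ q ∧ q ≤ r ↔ penc w <+: penc (T.drop (Rinv q))))
    -- [l'..r'] is the cw-interval
    (l' r' : ℕ) (hr' : r' < n)
    (hcwint : ∀ q < n,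
      (l' ≤ q ∧ q ≤ r' ↔ penc (PSym.p a :: w) <+: penc (T.drop (Rinv q))))
    -- l'' and r'' are the first and last positions in [l..r]
    -- with L-value fce(cw)
    (l'' r'' : ℕ)
    (hl1 : l ≤ l'') (hl2 : l'' ≤ r) (hl3 : L l'' = fce (PSym.p a :: w))
    (hl4 : ∀ q, l ≤ q → q ≤ r → L q = fce (PSym.p a :: w) → l'' ≤ q)
    (hr1 : l ≤ r'') (hr2 : r'' ≤ r) (hr3 : L r'' = fce (PSym.p a :: w))
    (hr4 : ∀ q, l ≤ q → q ≤ r → L q = fce (PSym.p a :: w) → q ≤ r'') :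
    (∀ p < n,
      (l' ≤ LF p ∧ LF p ≤ r') ↔ (l ≤ p ∧ p ≤ r ∧ L p = fce (PSym.p a :: w))) ∧
    l' = LF l'' ∧ r' = LF r'' :=
  stmt18_general T n hn Rinv hdom hsorted R hRdom hRinv hR L hL LF hLF w a hocc l r hr hwint l' r'
    hr' hcwint l'' r'' hl1 hl2 hl3 hl4 hr1 hr2 hr3 hr4
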